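/- In a RAC₂ drawing in which every edge has exactly two bends, every block consists of segments of at most two distinct directions, and if a block contains segments of two distinct directions then these two directions are orthogonal. -/

import Mathlib

open Set

/-! ## Polylines in the plane -/

/-- Cross product (determinant) of two plane vectors; it vanishes iff they are parallel. -/
def cross2 (u v : ℝ × ℝ) : ℝ := u.1 * v.2 - u.2 * v.1

/-- Dot product of two plane vectors; it vanishes iff they are orthogonal. -/
def dot2 (u v : ℝ × ℝ) : ℝ := u.1 * v.1 + u.2 * v.2

/-- A polyline (polygonal path) in the plane, with `k ≥ 1` segments,
visiting the points `pts 0, pts 1, …, pts k` in this order.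
It has `k - 1` bends (at `pts 1, …, pts (k-1)`). -/
structure Polyline where
  k : ℕ
  kpos : 1 ≤ k
  pts : Fin (k + 1) → ℝ × ℝ

namespace Polyline

/-- The starting point of a polyline. -/
def src (e : Polyline) : ℝ × ℝ := e.pts 0

/-- The final point of a polyline. -/
def tgt (e : Polyline) : ℝ × ℝ := e.pts (Fin.last e.k)

/-- The `i`-th closed segment of a polyline. -/
def seg (e : Polyline) (i : Fin e.k) : Set (ℝ × ℝ) :=
  segment ℝ (e.pts i.castSucc) (e.pts i.succ)

/-- The relative interior of the `i`-th segment of a polyline. -/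
def openSeg (e : Polyline) (i : Fin e.k) : Set (ℝ × ℝ) :=
  openSegment ℝ (e.pts i.castSucc) (e.pts i.succ)

/-- The direction vector of the `i`-th segment of a polyline. -/
def dirAt (e : Polyline) (i : Fin e.k) : ℝ × ℝ :=
  e.pts i.succ - e.pts i.castSucc

/-- The trace (image) of a polyline in the plane. -/
def image (e : Polyline) : Set (ℝ × ℝ) := ⋃ i : Fin e.k, e.seg i

/-- The piecewise linear parametrization of a polyline over `[0,1]`. -/
noncomputable def param (e : Polyline) (t : ℝ) : ℝ × ℝ :=
  (1 - (t * e.k - ((min ⌊t * e.k⌋₊ (e.k - 1) : ℕ) : ℝ))) •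
      e.pts ⟨min ⌊t * e.k⌋₊ (e.k - 1), by have := e.kpos; omega⟩ +
    (t * e.k - ((min ⌊t * e.k⌋₊ (e.k - 1) : ℕ) : ℝ)) •
      e.pts ⟨min ⌊t * e.k⌋₊ (e.k - 1) + 1, by have := e.kpos; omega⟩

/-- A polyline is a Jordan arc: it is a simple (injective) curve; a closed
polyline (a loop) must be injective away from the common endpoint. -/
def IsJordan (e : Polyline) : Prop :=
  (e.src = e.tgt → InjOn e.param (Ico (0 : ℝ) 1)) ∧
  (e.src ≠ e.tgt → InjOn e.param (Icc (0 : ℝ) 1))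

end Polyline

/-! ## Drawings of graphs with polyline edges -/

/-- A drawing of a simple graph `G` in the plane: vertices are placed at distinct
points, every edge is drawn as a simple polyline joining the points of its two
endpoints and avoiding all other vertex points, and any two distinct edges meet
only at shared endpoint vertices or at proper (transversal) crossing points lying
in the relative interiors of segments of both edges. -/
structure PolyDrawing {V : Type*} (G : SimpleGraph V) where
  pos : V → ℝ × ℝ
  pos_inj : Function.Injective pos
  poly : G.edgeSet → Polyline
  jordan : ∀ e, (poly e).IsJordan
  ends : ∀ (e : G.edgeSet) (u v : V), (e : Sym2 V) = s(u, v) →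
    ((poly e).src = pos u ∧ (poly e).tgt = pos v) ∨
    ((poly e).src = pos v ∧ (poly e).tgt = pos u)
  avoid : ∀ (e : G.edgeSet) (w : V), pos w ∈ (poly e).image →
    pos w = (poly e).src ∨ pos w = (poly e).tgt
  meet : ∀ e f : G.edgeSet, e ≠ f → ∀ x, x ∈ (poly e).image → x ∈ (poly f).image →
    (∃ w : V, x = pos w) ∨
    (∃ (i : Fin (poly e).k) (j : Fin (poly f).k),
      x ∈ (poly e).openSeg i ∧ x ∈ (poly f).openSeg j ∧
      cross2 ((poly e).dirAt i) ((poly f).dirAt j) ≠ 0)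

namespace PolyDrawing

variable {V : Type*} {G : SimpleGraph V}

/-- A drawing is a RAC (right-angle-crossing) drawing if any two segments of
distinct edges that cross do so at a right angle. -/
def IsRAC (D : PolyDrawing G) : Prop :=
  ∀ e f : G.edgeSet, e ≠ f → ∀ (i : Fin (D.poly e).k) (j : Fin (D.poly f).k) (x : ℝ × ℝ),
    x ∈ (D.poly e).openSeg i → x ∈ (D.poly f).openSeg j →
    dot2 ((D.poly e).dirAt i) ((D.poly f).dirAt j) = 0

/-- The (edge) segments of a drawing: an edge together with one of its segments. -/
def Seg (D : PolyDrawing G) : Type _ := Σ e : G.edgeSet, Fin (D.poly e).k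

/-- The direction vector of a segment of the drawing. -/
def segDir (D : PolyDrawing G) (s : D.Seg) : ℝ × ℝ := (D.poly s.1).dirAt s.2

/-- Two segments of a drawing cross: they belong to distinct edges and their
relative interiors share a point. -/
def SegCross (D : PolyDrawing G) (s t : D.Seg) : Prop :=
  s.1 ≠ t.1 ∧ ∃ x, x ∈ (D.poly s.1).openSeg s.2 ∧ x ∈ (D.poly t.1).openSeg t.2

/-- Two segments lie in the same block: they are related by the equivalence
relation generated by the crossing relation `s₁ ∼ s₂ ⟺ s₁ and s₂ cross`. -/
def SameBlock (D : PolyDrawing G) : D.Seg → D.Seg → Prop :=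
  Relation.EqvGen D.SegCross

/-- A segment is an end segment of its edge (the first or the last segment). -/
def IsEndSeg (D : PolyDrawing G) (s : D.Seg) : Prop :=
  (s.2 : ℕ) = 0 ∨ (s.2 : ℕ) + 1 = (D.poly s.1).k

/-- A segment is a middle segment of its edge. -/
def IsMiddleSeg (D : PolyDrawing G) (s : D.Seg) : Prop := ¬ D.IsEndSeg s

end PolyDrawing

/-- Algebra helper: if `a ≠ 0` is parallel to `u` and orthogonal to `b`,
then `b` is parallel to the rotation of `u` by 90°. -/
lemma perp_helper (u a b : ℝ × ℝ) (ha : a ≠ 0) (h1 : cross2 a u = 0) (h2 : dot2 a b = 0) :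
    cross2 b (-u.2, u.1) = 0 := by
  have h : a.1 ≠ 0 ∨ a.2 ≠ 0 := by
    by_contra hc; push_neg at hc; exact ha (Prod.ext hc.1 hc.2)
  unfold cross2 dot2 at *
  rcases h with h | h
  · have key : a.1 * (b.1 * u.1 - b.2 * (-u.2)) = 0 := by linear_combination u.1 * h2 + b.2 * h1
    exact (mul_eq_zero.mp key).resolve_left h
  · have key : a.2 * (b.1 * u.1 - b.2 * (-u.2)) = 0 := by linear_combination u.2 * h2 - b.1 * h1
    exact (mul_eq_zero.mp key).resolve_left h

/-- Evaluation of the parametrization once the relevant segment index is known. -/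
lemma Polyline.param_eq (e : Polyline) (t : ℝ) (n : ℕ) (hle : n + 1 ≤ e.k)
    (hn : min ⌊t * (e.k : ℝ)⌋₊ (e.k - 1) = n) :
    e.param t = (1 - (t * e.k - n)) • e.pts ⟨n, by omega⟩ +
      (t * e.k - n) • e.pts ⟨n + 1, by omega⟩ := by
  simp only [Polyline.param, hn]

/-- A Jordan polyline has no degenerate segment. -/
lemma Polyline.dirAt_ne_zero (e : Polyline) (hJ : e.IsJordan) (i : Fin e.k) :
    e.dirAt i ≠ 0 := by
  intro h0
  have hdeg : e.pts i.castSucc = e.pts i.succ := (sub_eq_zero.mp h0).symm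
  have hnk : (i : ℕ) < e.k := i.isLt
  set n : ℕ := (i : ℕ) with hn
  have hk0 : (0 : ℝ) < e.k := by exact_mod_cast Nat.lt_of_lt_of_le Nat.zero_lt_one e.kpos
  have hkne : (e.k : ℝ) ≠ 0 := ne_of_gt hk0
  set t1 : ℝ := n / e.k with ht1
  set t2 : ℝ := (2 * n + 1) / (2 * e.k) with ht2
  have h1 : t1 * e.k = n := by rw [ht1]; field_simp
  have h2 : t2 * e.k = n + 1 / 2 := by rw [ht2]; field_simp
  have hf1 : min ⌊t1 * (e.k : ℝ)⌋₊ (e.k - 1) = n := by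
    rw [h1, Nat.floor_natCast]; omega
  have hfl2 : ⌊(n : ℝ) + 1 / 2⌋₊ = n := by
    rw [Nat.floor_eq_iff (by positivity)]
    constructor
    · linarith
    · push_cast; linarith
  have hf2 : min ⌊t2 * (e.k : ℝ)⌋₊ (e.k - 1) = n := by
    rw [h2, hfl2]; omega
  have p1 := Polyline.param_eq e t1 n (by omega) hf1
  have p2 := Polyline.param_eq e t2 n (by omega) hf2
  have ecast : (⟨n, by omega⟩ : Fin (e.k + 1)) = i.castSucc := by
    apply Fin.ext; simp [hn]
  have esucc : (⟨n + 1, by omega⟩ : Fin (e.k + 1)) = i.succ := by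
    apply Fin.ext; simp [hn]
  have q1 : e.param t1 = e.pts i.castSucc := by
    rw [p1]; simp only [h1, ecast, esucc]; simp
  have q2 : e.param t2 = e.pts i.castSucc := by
    rw [p2]; simp only [h2, ecast, esucc, ← hdeg]
    have hc : ((n : ℝ) + 1 / 2 - n) = 1 / 2 := by ring
    rw [hc, ← add_smul]
    norm_num
  have m1 : t1 ∈ Ico (0 : ℝ) 1 := by
    constructor
    · positivity
    · rw [ht1, div_lt_one hk0]; exact_mod_cast hnk
  have m2 : t2 ∈ Ico (0 : ℝ) 1 := by
    constructor
    · positivity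
    · rw [ht2, div_lt_one (by positivity)]
      have : (n : ℝ) + 1 ≤ e.k := by exact_mod_cast hnk
      linarith
  have tne : t1 ≠ t2 := by
    intro h
    rw [h, h2] at h1
    linarith
  obtain ⟨hloop, hnloop⟩ := hJ
  by_cases hst : e.src = e.tgt
  · exact tne (hloop hst m1 m2 (q1.trans q2.symm))
  · exact tne (hnloop hst (Ico_subset_Icc_self m1) (Ico_subset_Icc_self m2) (q1.trans q2.symm))

/-- In a RAC₂ drawing in which every edge has exactly two bends (three segments),
every block consists of segments of at most two distinct directions, and if there
are two distinct directions then they are orthogonal: for every segment `s` there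
is a pair of orthogonal directions such that every segment in the block of `s`
is parallel to one of them. -/
theorem block_two_orthogonal_directions {V : Type*} {G : SimpleGraph V}
    (D : PolyDrawing G) (hRAC : D.IsRAC)
    (hbends : ∀ e : G.edgeSet, (D.poly e).k = 3)
    (s : D.Seg) :
    ∃ u v : ℝ × ℝ, u ≠ 0 ∧ v ≠ 0 ∧ dot2 u v = 0 ∧
      ∀ t : D.Seg, D.SameBlock s t →
        cross2 (D.segDir t) u = 0 ∨ cross2 (D.segDir t) v = 0 := by
  have hdir : ∀ t : D.Seg, D.segDir t ≠ 0 := fun t =>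
    Polyline.dirAt_ne_zero _ (D.jordan t.1) t.2
  set u : ℝ × ℝ := D.segDir s with hu
  set v : ℝ × ℝ := (-u.2, u.1) with hv
  have hune : u ≠ 0 := hdir s
  refine ⟨u, v, hune, ?_, ?_, ?_⟩
  · intro h
    apply hune
    have h0 : -u.2 = 0 := by have := congrArg Prod.fst h; simpa [hv] using this
    have h1 : u.2 = 0 := by linarith
    have h2 : u.1 = 0 := by have := congrArg Prod.snd h; simpa [hv] using this
    exact Prod.ext h2 h1
  · show dot2 u (-u.2, u.1) = 0
    unfold dot2; ring
  · -- the invariant is preserved by crossing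
    set P : D.Seg → Prop := fun t => cross2 (D.segDir t) u = 0 ∨ cross2 (D.segDir t) v = 0
      with hP
    have step : ∀ x y : D.Seg, D.SegCross x y → P x → P y := by
      rintro x y ⟨hne, pt, hx, hy⟩ hPx
      have hperp : dot2 (D.segDir x) (D.segDir y) = 0 :=
        hRAC x.1 y.1 hne x.2 y.2 pt hx hy
      rcases hPx with hpar | hpar
      · right
        exact perp_helper u _ _ (hdir x) hpar hperp
      · left
        have := perp_helper v _ _ (hdir x) hpar hperp
        have hvv : ((-v.2, v.1) : ℝ × ℝ) = (-u.1, -u.2) := by simp [hv]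
        rw [hvv] at this
        unfold cross2 at this ⊢
        simp only at this ⊢
        linarith
    have cross_symm : ∀ x y : D.Seg, D.SegCross x y → D.SegCross y x := by
      rintro x y ⟨hne, pt, hx, hy⟩
      exact ⟨hne.symm, pt, hy, hx⟩
    have key : ∀ x y : D.Seg, D.SameBlock x y → (P x ↔ P y) := by
      intro x y h
      induction h with
      | rel a b hab => exact ⟨step a b hab, step b a (cross_symm a b hab)⟩
      | refl a => exact Iff.rfl
      | symm a b _ ih => exact ih.symm
      | trans a b c _ _ ih1 ih2 => exact ih1.trans ih2
    intro t hst
    refine (key s t hst).mp ?_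
    left
    show cross2 u u = 0
    unfold cross2; ring
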